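/- Let X̃ ⊆ P^{r+1} be a smooth rational normal scroll of codimension at least 2 with scroll map φ : X̃ → P¹, and let p ∈ Sec(X̃) \ X̃ be a closed point with dim Sec_p(X̃) ≥ 2. Then the restriction φ|_{Σ_p(X̃)} : Σ_p(X̃) → P¹ is surjective; that is, Σ_p(X̃) is not contained in any single ruling L(x). -/

import Mathlib

/-!
Common framework: projective space over an algebraically closed field, linear
subspaces, Zariski closure, tangent spaces, secant cones and secant loci,
rational normal scrolls (possibly cones) and their distinguished subvarieties.
-/

open Projectivization MvPolynomial

noncomputable section

namespace SecantLoci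

/-- Projective `N`-space over `K`, with homogeneous coordinates indexed by `Fin (N+1)`. -/
abbrev PS (K : Type*) [Field K] (N : ℕ) := Projectivization K (Fin (N + 1) → K)

variable {K : Type*} [Field K] {N : ℕ}

/-- The affine cone over a set of projective points (it contains `0`). -/
def cone (S : Set (PS K N)) : Set (Fin (N + 1) → K) :=
  { v | ∀ hv : v ≠ 0, Projectivization.mk K v hv ∈ S }

/-- The set of projective points lying in the projectivization of a linear subspace `W`. -/
def linSet (W : Submodule K (Fin (N + 1) → K)) : Set (PS K N) :=
  { x | x.submodule ≤ W }

/-- `S` is a projective linear subspace of (projective) dimension `d`. -/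
def IsLinearOfDim (S : Set (PS K N)) (d : ℕ) : Prop :=
  ∃ W : Submodule K (Fin (N + 1) → K), Module.finrank K W = d + 1 ∧ S = linSet W

/-- The projective linear span of a set of projective points. -/
def projSpan (S : Set (PS K N)) : Set (PS K N) :=
  linSet (⨆ x ∈ S, x.submodule)

/-- The line through two points (the span of the pair). -/
def lineThrough (p q : PS K N) : Set (PS K N) := projSpan {p, q}

def IsLine (S : Set (PS K N)) : Prop := IsLinearOfDim S 1

def IsPlane (S : Set (PS K N)) : Prop := IsLinearOfDim S 2

/-- The polynomials vanishing on the affine cone over `S`. -/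
def vanishing (S : Set (PS K N)) : Set (MvPolynomial (Fin (N + 1)) K) :=
  { f | ∀ v ∈ cone S, eval v f = 0 }

/-- The Zariski closure of a set of projective points. -/
def zcl (S : Set (PS K N)) : Set (PS K N) :=
  { x | ∀ f ∈ vanishing S, eval x.rep f = 0 }

def IsZClosed (S : Set (PS K N)) : Prop := zcl S = S

/-- Irreducibility with respect to Zariski closed sets. -/
def IsIrred (S : Set (PS K N)) : Prop :=
  S.Nonempty ∧ ∀ A B : Set (PS K N),
    IsZClosed A → IsZClosed B → S ⊆ A ∪ B → S ⊆ A ∨ S ⊆ B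

/-- `dimGE S k` : the (Zariski) dimension of `S` is at least `k`, i.e. there is a
strictly increasing chain of `k+1` nonempty irreducible closed subsets of the closure of `S`. -/
def dimGE (S : Set (PS K N)) (k : ℕ) : Prop :=
  ∃ c : Fin (k + 1) → Set (PS K N), StrictMono c ∧
    (∀ i, IsZClosed (c i) ∧ IsIrred (c i)) ∧ c (Fin.last k) ⊆ zcl S

/-- The embedded join of two sets: the Zariski closure of the union of all lines
joining a point of `Y` to a point of `Z` (together with `Y` and `Z` themselves). -/
def join (Y Z : Set (PS K N)) : Set (PS K N) :=
  zcl (Y ∪ Z ∪ ⋃ y ∈ Y, ⋃ z ∈ Z, lineThrough y z)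

/-- The (projective) Zariski tangent space of `X` at `q`: the projectivization of the
kernel of the linear parts at `q` of all polynomials vanishing on the cone over `X`. -/
def tangentSpace (X : Set (PS K N)) (q : PS K N) : Set (PS K N) :=
  { x | ∀ f ∈ vanishing X, ∑ i, x.rep i * eval q.rep (pderiv i f) = 0 }

/-- A line `L` is a secant line of `X` when it meets `X` in a scheme of length at least 2:
equivalently, it meets `X` in two distinct points, or it is tangent to `X` at some point. -/
def IsSecantLine (X L : Set (PS K N)) : Prop :=
  IsLine L ∧
    ((∃ x ∈ X ∩ L, ∃ y ∈ X ∩ L, x ≠ y) ∨ ∃ q ∈ X ∩ L, L ⊆ tangentSpace X q)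

/-- The secant cone `Sec_p(X)`: the union of all secant lines of `X` through `p`
(just `{p}` if there is no such line). -/
def secCone (X : Set (PS K N)) (p : PS K N) : Set (PS K N) :=
  {p} ∪ ⋃ L ∈ { L | IsSecantLine X L ∧ p ∈ L }, L

/-- The secant locus `Σ_p(X)` (as a set: the support of the scheme-theoretic
intersection of `X` with the secant cone). -/
def secLocus (X : Set (PS K N)) (p : PS K N) : Set (PS K N) :=
  X ∩ secCone X p

/-- The secant variety: the Zariski closure of the union of all chords of `X`. -/
def secVariety (X : Set (PS K N)) : Set (PS K N) :=
  zcl (⋃ x ∈ X, ⋃ y ∈ X, ⋃ _ : x ≠ y, lineThrough x y)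

/-- The tangent variety: the Zariski closure of the union of all tangent spaces of `X`. -/
def tanVariety (X : Set (PS K N)) : Set (PS K N) :=
  zcl (⋃ q ∈ X, tangentSpace X q)

/-- `S` is a smooth plane conic: the image of `ℙ¹` under a degree-2 Veronese map into
the plane spanned by three linearly independent vectors. -/
def IsSmoothConic (S : Set (PS K N)) : Prop :=
  ∃ v : Fin 3 → (Fin (N + 1) → K), LinearIndependent K v ∧
    S = { x | ∃ s t : K, (s, t) ≠ (0, 0) ∧
      x.submodule = Submodule.span K {s ^ 2 • v 0 + (s * t) • v 1 + t ^ 2 • v 2} }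

/-- `S` is a smooth quadric surface (in the 3-space spanned by four independent vectors):
the image of `ℙ¹ × ℙ¹` under a Segre map. -/
def IsSmoothQuadricSurface (S : Set (PS K N)) : Prop :=
  ∃ v : Fin 2 → Fin 2 → (Fin (N + 1) → K),
    LinearIndependent K (fun q : Fin 2 × Fin 2 => v q.1 q.2) ∧
    S = { x | ∃ b c : Fin 2 → K, b ≠ 0 ∧ c ≠ 0 ∧
      x.submodule = Submodule.span K {∑ i, ∑ j, (b i * c j) • v i j} }

/-- The data of a smooth rational normal scroll of type `(a 0, …, a (n-1))` in `ℙ^N`: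
a family of linearly independent vectors `v i j`, `0 ≤ j ≤ a i`, giving the rational
normal curve directrices of the scroll. -/
structure ScrollData (K : Type*) [Field K] (N n : ℕ) (a : Fin n → ℕ) where
  v : (i : Fin n) → Fin (a i + 1) → (Fin (N + 1) → K)
  indep : LinearIndependent K fun q : (i : Fin n) × Fin (a i + 1) => v q.1 q.2

namespace ScrollData

variable {n : ℕ} {a : Fin n → ℕ}

/-- The point of the `i`-th directrix curve over the parameter `(s : t) ∈ ℙ¹`. -/
def w (D : ScrollData K N n a) (i : Fin n) (s t : K) : Fin (N + 1) → K :=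
  ∑ j : Fin (a i + 1), (s ^ (a i - (j : ℕ)) * t ^ (j : ℕ)) • D.v i j

/-- The ruling of the scroll over the parameter `(s : t) ∈ ℙ¹`:
the linear span of the points of the directrix curves over `(s : t)`. -/
def ruling (D : ScrollData K N n a) (s t : K) : Set (PS K N) :=
  linSet (Submodule.span K (Set.range fun i => D.w i s t))

/-- The scroll itself: the union of its rulings. -/
def carrier (D : ScrollData K N n a) : Set (PS K N) :=
  ⋃ (s : K) (t : K) (_ : (s, t) ≠ (0, 0)), D.ruling s t

/-- A line section of the scroll: a line contained in the scroll meeting each ruling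
in exactly one point (a section of the scroll map `φ`). -/
def IsLineSection (D : ScrollData K N n a) (L : Set (PS K N)) : Prop :=
  IsLine L ∧ L ⊆ D.carrier ∧
    ∀ s t : K, (s, t) ≠ (0, 0) → ∃! x, x ∈ L ∩ D.ruling s t

/-- The subscroll `S(1̲)` swept out by the line sections, i.e. the subscroll
corresponding to the indices with `a i = 1`. -/
def sub1 (D : ScrollData K N n a) : Set (PS K N) :=
  ⋃ (s : K) (t : K) (_ : (s, t) ≠ (0, 0)),
    linSet (Submodule.span K
      (Set.range fun i : { i : Fin n // a i = 1 } => D.w i.1 s t))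

/-- The subscroll `S(2̲)` corresponding to the indices with `a i = 2`. -/
def sub2 (D : ScrollData K N n a) : Set (PS K N) :=
  ⋃ (s : K) (t : K) (_ : (s, t) ≠ (0, 0)),
    linSet (Submodule.span K
      (Set.range fun i : { i : Fin n // a i = 2 } => D.w i.1 s t))

/-- The Segre variety `Δ = ⋃_β ⟨C_β⟩ ≅ ℙ² × ℙ^{m-k-1}`: the union of the planes of
the conic sections `C_β` of the subscroll `S(2̲)`. -/
def delta (D : ScrollData K N n a) : Set (PS K N) :=
  ⋃ (β : { i : Fin n // a i = 2 } → K) (_ : β ≠ 0),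
    linSet (Submodule.span K (Set.range fun j : Fin 3 =>
      ∑ i : { i : Fin n // a i = 2 }, β i •
        D.v i.1 ⟨(j : ℕ), by have h1 := i.2; have h2 := j.isLt; omega⟩))

end ScrollData

/-- The data of a (possibly singular) rational normal scroll in `ℙ^N` with vertex of
projective dimension `hv - 1` (empty vertex when `hv = 0`, i.e. a smooth scroll):
a cone over the smooth rational normal scroll `base`, with vertex spanned by the
vectors `zv`, the whole configuration being linearly independent and spanning `ℙ^N`. -/
structure ConeScroll (K : Type*) [Field K] (N n : ℕ) (a : Fin n → ℕ) (hv : ℕ) where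
  zv : Fin hv → (Fin (N + 1) → K)
  base : ScrollData K N n a
  indep : LinearIndependent K
    (Sum.elim zv fun q : (i : Fin n) × Fin (a i + 1) => base.v q.1 q.2)
  total : N + 1 = hv + ∑ i, (a i + 1)

namespace ConeScroll

variable {n hv : ℕ} {a : Fin n → ℕ}

/-- The vertex `Vert(X̃)` of the cone. -/
def vertex (C : ConeScroll K N n a hv) : Set (PS K N) :=
  linSet (Submodule.span K (Set.range C.zv))

/-- The linear span `⟨X̃₀⟩` of the smooth base scroll. -/
def baseSpan (C : ConeScroll K N n a hv) : Set (PS K N) :=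
  projSpan C.base.carrier

/-- The scroll `X̃ = Join(Vert(X̃), X̃₀)` itself. -/
def carrier (C : ConeScroll K N n a hv) : Set (PS K N) :=
  join C.vertex C.base.carrier

/-- `Σ_p(X̃) = 2·Vert(X̃)`: the secant locus is (set-theoretically) the vertex,
with double structure. -/
def SLempty (C : ConeScroll K N n a hv) (p : PS K N) : Prop :=
  secLocus C.carrier p = C.vertex

/-- `Σ_p(X̃) = Join(Vert(X̃), {x, y})` for two distinct points `x, y` of `⟨X̃₀⟩`. -/
def SLpair (C : ConeScroll K N n a hv) (p : PS K N) : Prop :=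
  ∃ x y : PS K N, x ∈ C.baseSpan ∧ y ∈ C.baseSpan ∧ x ≠ y ∧
    secLocus C.carrier p = join C.vertex {x, y}

/-- `Σ_p(X̃) = 2⟨Vert(X̃), x⟩` for a point `x` of a line `L ⊆ ⟨X̃₀⟩`. -/
def SLdouble (C : ConeScroll K N n a hv) (p : PS K N) : Prop :=
  ∃ L : Set (PS K N), IsLine L ∧ L ⊆ C.baseSpan ∧ ∃ x ∈ L,
    secLocus C.carrier p = projSpan (C.vertex ∪ {x})

/-- `Σ_p(X̃) = Join(Vert(X̃), L ∪ L')` for two distinct coplanar lines `L, L' ⊆ ⟨X̃₀⟩`. -/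
def SLlines (C : ConeScroll K N n a hv) (p : PS K N) : Prop :=
  ∃ L L' : Set (PS K N), IsLine L ∧ IsLine L' ∧ L ≠ L' ∧
    (∃ Pl : Set (PS K N), IsPlane Pl ∧ L ⊆ Pl ∧ L' ⊆ Pl) ∧
    L ⊆ C.baseSpan ∧ L' ⊆ C.baseSpan ∧
    secLocus C.carrier p = join C.vertex (L ∪ L')

/-- `Σ_p(X̃) = Join(Vert(X̃), V)` for a smooth plane conic `V ⊆ ⟨X̃₀⟩`. -/
def SLconic (C : ConeScroll K N n a hv) (p : PS K N) : Prop :=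
  ∃ V : Set (PS K N), IsSmoothConic V ∧ V ⊆ C.baseSpan ∧
    secLocus C.carrier p = join C.vertex V

/-- `Σ_p(X̃) = Join(Vert(X̃), W)` for a smooth quadric surface `W ⊆ ⟨X̃₀⟩`. -/
def SLquadric (C : ConeScroll K N n a hv) (p : PS K N) : Prop :=
  ∃ W : Set (PS K N), IsSmoothQuadricSurface W ∧ W ⊆ C.baseSpan ∧
    secLocus C.carrier p = join C.vertex W

end ConeScroll

/-- The homogeneous vanishing ideal of a set of projective points. -/
def vanishingIdeal (S : Set (PS K N)) : Ideal (MvPolynomial (Fin (N + 1)) K) where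
  carrier := vanishing S
  add_mem' := by
    intro f g hf hg v hv
    simp [map_add, hf v hv, hg v hv]
  zero_mem' := by intro v hv; simp
  smul_mem' := by
    intro c f hf v hv
    simp [smul_eq_mul, hf v hv]

/-- `rs` is a regular sequence on `R/I` (expressed without passing to the quotient):
the sequence stays proper modulo `I` and each entry is a nonzerodivisor modulo
`I` together with the previous entries. -/
def IsRegModulo {R : Type*} [CommRing R] (I : Ideal R) (rs : List R) : Prop :=
  (I ⊔ Ideal.span { x | x ∈ rs } ≠ ⊤) ∧
  ∀ (i : ℕ) (h : i < rs.length) (y : R),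
    rs.get ⟨i, h⟩ * y ∈ I ⊔ Ideal.span { x | x ∈ rs.take i } →
    y ∈ I ⊔ Ideal.span { x | x ∈ rs.take i }

/-- `S ⊆ ℙ^N` is arithmetically Cohen–Macaulay: its homogeneous coordinate ring
admits a regular sequence, inside the irrelevant maximal ideal, of length equal to
its Krull dimension. -/
def IsACM (S : Set (PS K N)) : Prop :=
  ∃ rs : List (MvPolynomial (Fin (N + 1)) K),
    (∀ f ∈ rs, f ∈ Ideal.span
      (Set.range (MvPolynomial.X : Fin (N + 1) → MvPolynomial (Fin (N + 1)) K))) ∧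
    IsRegModulo (vanishingIdeal S) rs ∧
    ((rs.length : ℕ∞) : WithBot ℕ∞) =
      ringKrullDim (MvPolynomial (Fin (N + 1)) K ⧸ vanishingIdeal S)

/-- The image of a subset of `ℙ^N` under the linear projection induced by a linear
map `T` on homogeneous coordinates. -/
def projImage {M : ℕ} (T : (Fin (N + 1) → K) →ₗ[K] (Fin (M + 1) → K))
    (X : Set (PS K N)) : Set (PS K M) :=
  { y | ∃ x ∈ X, y.submodule = Submodule.map T x.submodule }

end SecantLoci

/-!
Write the secant cone as `ℙ(W)` and the ruling over `(s : t)` as `ℙ(R(s, t))`, where `R(s, t)` is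
the kernel of a pencil of linear maps. Suppose `W ∩ R(s₁, t₁) = 0` for some `(s₁ : t₁)`. Then only
finitely many of the subspaces `W ∩ R(s, t)` are nonzero (an endomorphism has finitely many
eigenvalues). Every point of `ℙ(W)` other than `p` lies on a secant line through `p`, which meets
the scroll inside `ℙ(W)`; so `W` is covered by the finitely many subspaces `⟨p⟩ + W ∩ R(s, t)`,
and `W = ⟨p⟩ ⊕ P₀` with `P₀ = W ∩ R(s₀, t₀)` of dimension at least 2. A general point `w` of `P₀`
is the only point of the scroll on the line `pw`, so this secant line is tangent to the scroll at
`w`: `p` lies in the tangent space at `w` of every quadric `2 × 2` minor. These polar conditions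
cut out at most a line of `R(s₀, t₀)`, contradicting `dim P₀ ≥ 2`. Hence every ruling meets
`ℙ(W)`, i.e. meets `Σ_p`, and as distinct rulings are disjoint, `Σ_p` lies in none of them.
-/

section LinearAlgebra

variable {K V : Type*} [Field K] [AddCommGroup V] [Module K V]

theorem Submodule.exists_mem_forall_notMem_of_finite [Infinite K] (G : Submodule K V)
    {S : Set (Submodule K V)} (hS : S.Finite) (h : ∀ T ∈ S, ¬ G ≤ T) :
    ∃ v ∈ G, ∀ T ∈ S, v ∉ T := by
  by_contra! hcov
  have : Finite S := hS
  obtain ⟨⟨T, hT⟩, htop⟩ := Subspace.exists_eq_top_of_iUnion_eq_univ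
    (p := fun T : S => (T : Submodule K V).comap G.subtype)
    (Set.eq_univ_of_forall fun g => by
      obtain ⟨T, hT, hgT⟩ := hcov g g.2
      exact Set.mem_iUnion.mpr ⟨⟨T, hT⟩, hgT⟩)
  exact h T hT fun x hx => (htop ▸ Submodule.mem_top : (⟨x, hx⟩ : G) ∈ T.comap G.subtype)

theorem Submodule.not_le_sup_of_disjoint [FiniteDimensional K V] {P Q R : Submodule K V}
    (hPR : Disjoint P R) (hQP : Module.finrank K Q < Module.finrank K P) : ¬ P ≤ Q ⊔ R := by
  intro hle
  have hsum := Submodule.finrank_sup_add_finrank_inf_eq P R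
  rw [hPR.eq_bot, finrank_bot] at hsum
  have hmono := Submodule.finrank_mono (sup_le hle le_sup_right : P ⊔ R ≤ Q ⊔ R)
  have hsub := Submodule.finrank_add_le_finrank_add_finrank Q R
  omega

/-- If `ν` is such that `f + ν • g` is not injective, then `-ν⁻¹` is an eigenvalue of `F ∘ g`
for a left inverse `F` of `f`; so only finitely many members of the pencil are not injective. -/
theorem LinearMap.finite_range_ker_pencil [FiniteDimensional K V] {M : Type*} [AddCommGroup M]
    [Module K M] (f g : V →ₗ[K] M) (hf : LinearMap.ker f = ⊥) :
    (Set.range fun x : K × K => LinearMap.ker (x.1 • f + x.2 • g)).Finite := by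
  obtain ⟨F, hF⟩ := f.exists_leftInverse_of_injective hf
  have hbad : {ν : K | LinearMap.ker (f + ν • g) ≠ ⊥} ⊆
      (fun μ => -μ⁻¹) '' {μ | Module.End.HasEigenvalue (F ∘ₗ g) μ} := by
    intro ν hν
    obtain ⟨v, hv, hv0⟩ := Submodule.exists_mem_ne_zero_of_ne_bot hν
    have hFv := congrArg F (LinearMap.mem_ker.mp hv)
    rw [LinearMap.add_apply, LinearMap.smul_apply, map_add, map_smul, ← LinearMap.comp_apply F f,
      hF, LinearMap.id_apply, map_zero] at hFv
    have hν0 : ν ≠ 0 := by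
      rintro rfl
      rw [zero_smul, add_zero] at hFv
      exact hv0 hFv
    refine ⟨-ν⁻¹, Module.End.hasEigenvalue_of_hasEigenvector
      ⟨Module.End.mem_eigenspace_iff.mpr ?_, hv0⟩, by simp⟩
    rw [LinearMap.comp_apply, ← inv_smul_smul₀ hν0 (F (g v)), eq_neg_of_add_eq_zero_right hFv,
      smul_neg, neg_smul]
  refine ((((Module.End.finite_hasEigenvalue (F ∘ₗ g)).image _).subset hbad).image
    (fun ν => LinearMap.ker (f + ν • g)) |>.insert ⊥ |>.insert (LinearMap.ker g) |>.insert ⊤).subset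
    ?_
  rintro _ ⟨⟨α, β⟩, rfl⟩
  rcases eq_or_ne α 0 with rfl | hα
  · rcases eq_or_ne β 0 with rfl | hβ
    · simp
    · simp [LinearMap.ker_smul _ _ hβ]
  · have hker : LinearMap.ker (α • f + β • g) = LinearMap.ker (f + (β / α) • g) := by
      rw [← LinearMap.ker_smul (f + (β / α) • g) _ hα, smul_add, smul_smul,
        mul_div_cancel₀ _ hα]
    by_cases hbot : LinearMap.ker (f + (β / α) • g) = ⊥
    · simp [hker, hbot]
    · exact Or.inr <| Or.inr <| Or.inr ⟨β / α, hbot, hker.symm⟩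

theorem LinearMap.sum_mul_apply_single {σ : Type*} [Fintype σ] [DecidableEq σ]
    (φ : (σ → K) →ₗ[K] K) (x : σ → K) :
    ∑ k, x k * φ (Pi.single k 1) = φ x := by
  rw [LinearMap.pi_apply_eq_sum_univ φ x]
  refine Finset.sum_congr rfl fun k _ => ?_
  rw [smul_eq_mul]
  congr 2
  funext j
  simp only [Pi.single_apply, @eq_comm _ j k]

end LinearAlgebra

namespace SecantLoci

section LinearForms

variable {K σ : Type*} [Field K] [Fintype σ] [DecidableEq σ]

def linearPoly (φ : (σ → K) →ₗ[K] K) : MvPolynomial σ K :=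
  ∑ k, C (φ (Pi.single k 1)) * X k

theorem eval_linearPoly (φ : (σ → K) →ₗ[K] K) (u : σ → K) : eval u (linearPoly φ) = φ u := by
  simp [linearPoly, mul_comm, φ.sum_mul_apply_single]

theorem pderiv_linearPoly (φ : (σ → K) →ₗ[K] K) (k : σ) :
    pderiv k (linearPoly φ) = C (φ (Pi.single k 1)) := by
  simp [linearPoly, pderiv_X, Pi.single_apply]

theorem sum_mul_eval_pderiv_linearPoly_mul (φ ψ : (σ → K) →ₗ[K] K) (x u : σ → K) :
    ∑ k, x k * eval u (pderiv k (linearPoly φ * linearPoly ψ)) = φ x * ψ u + φ u * ψ x := by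
  simp only [pderiv_mul, pderiv_linearPoly, map_add, map_mul, eval_C, eval_linearPoly]
  rw [← φ.sum_mul_apply_single x, ← ψ.sum_mul_apply_single x, Finset.sum_mul, Finset.mul_sum,
    ← Finset.sum_add_distrib]
  exact Finset.sum_congr rfl fun k _ => by ring

end LinearForms

section Scrolls

variable {K : Type*} [Field K] {N n : ℕ} {a : Fin n → ℕ}

theorem mem_linSet_iff_rep {W : Submodule K (Fin (N + 1) → K)} {x : PS K N} :
    x ∈ linSet W ↔ x.rep ∈ W := by
  rw [linSet, Set.mem_ofPred_eq, Projectivization.submodule_eq,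
    Submodule.span_singleton_le_iff_mem]

theorem mk_mem_linSet_iff {W : Submodule K (Fin (N + 1) → K)} {v : Fin (N + 1) → K}
    (hv : v ≠ 0) : Projectivization.mk K v hv ∈ linSet W ↔ v ∈ W := by
  rw [linSet, Set.mem_ofPred_eq, Projectivization.submodule_mk,
    Submodule.span_singleton_le_iff_mem]

theorem eq_mk_of_rep_mem_span_singleton {x : PS K N} {w : Fin (N + 1) → K} (hw : w ≠ 0)
    (h : x.rep ∈ K ∙ w) : x = Projectivization.mk K w hw := by
  obtain ⟨c, hc⟩ := Submodule.mem_span_singleton.mp h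
  rw [← x.mk_rep, Projectivization.mk_eq_mk_iff']
  exact ⟨c, hc⟩

theorem lineThrough_eq (p q : PS K N) :
    lineThrough p q = linSet (Submodule.span K {p.rep, q.rep}) := by
  rw [lineThrough, projSpan, iSup_pair, Submodule.span_insert, Projectivization.submodule_eq,
    Projectivization.submodule_eq]

theorem lineThrough_mk (p : PS K N) {w : Fin (N + 1) → K} (hw : w ≠ 0) :
    lineThrough p (Projectivization.mk K w hw) = linSet (Submodule.span K {p.rep, w}) := by
  rw [lineThrough, projSpan, iSup_pair, Submodule.span_insert, Projectivization.submodule_eq,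
    Projectivization.submodule_mk]

theorem IsLine.eq_lineThrough {L : Set (PS K N)} (hL : IsLine L) {p q : PS K N}
    (hp : p ∈ L) (hq : q ∈ L) (hpq : p ≠ q) : L = lineThrough p q := by
  obtain ⟨U, hU, rfl⟩ := hL
  rw [lineThrough_eq]
  congr 1
  refine (Submodule.eq_of_le_of_finrank_eq ?_ ?_).symm
  · rw [Submodule.span_le, Set.insert_subset_iff, Set.singleton_subset_iff]
    exact ⟨mem_linSet_iff_rep.mp hp, mem_linSet_iff_rep.mp hq⟩
  · have := finrank_span_eq_card (Projectivization.linearIndependent_pair_iff_ne.mpr hpq)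
    rw [Matrix.range_cons_cons_empty, Fintype.card_fin] at this
    rw [this, hU]

theorem self_mem_secCone (X : Set (PS K N)) (p : PS K N) : p ∈ secCone X p :=
  Set.mem_union_left _ rfl

theorem exists_secant_of_mem_secCone {X : Set (PS K N)} {p q : PS K N}
    (hq : q ∈ secCone X p) (hqp : q ≠ p) :
    (∃ x ∈ X ∩ lineThrough p q, ∃ y ∈ X ∩ lineThrough p q, x ≠ y) ∨
      ∃ z ∈ X ∩ lineThrough p q, p ∈ tangentSpace X z := by
  obtain hq | hq := hq
  · exact absurd hq hqp
  obtain ⟨L, ⟨⟨hL, hsec⟩, hpL⟩, hqL⟩ := Set.mem_iUnion₂.mp hq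
  rw [hL.eq_lineThrough hpL hqL hqp.symm] at hsec hpL
  exact hsec.imp_right fun ⟨z, hz, hT⟩ => ⟨z, hz, hT hpL⟩

theorem exists_mem_lineThrough_of_mem_secCone {X : Set (PS K N)} {p q : PS K N}
    (hq : q ∈ secCone X p) (hqp : q ≠ p) : ∃ z ∈ X, z ∈ lineThrough p q := by
  rcases exists_secant_of_mem_secCone hq hqp with ⟨x, hx, -⟩ | ⟨z, hz, -⟩
  · exact ⟨x, hx⟩
  · exact ⟨z, hz⟩

theorem eq_zero_of_mul_eq_zero_of_mul_eq_zero {s t e : K} (hst : (s, t) ≠ (0, 0))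
    (hs : s * e = 0) (ht : t * e = 0) : e = 0 := by
  by_contra he
  exact hst (by rw [(mul_eq_zero.mp hs).resolve_right he, (mul_eq_zero.mp ht).resolve_right he])

theorem exists_mul_sub_mul_eq_one {s t : K} (hst : (s, t) ≠ (0, 0)) :
    ∃ s' t' : K, s * t' - t * s' = 1 := by
  rcases eq_or_ne s 0 with rfl | hs
  · have ht : t ≠ 0 := fun h => hst (by rw [h])
    exact ⟨-t⁻¹, 0, by rw [zero_mul, zero_sub, mul_neg, neg_neg, mul_inv_cancel₀ ht]⟩
  · exact ⟨0, s⁻¹, by rw [mul_inv_cancel₀ hs, mul_zero, sub_zero]⟩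

theorem exists_eq_mul_pow_mul_pow_of_recurrence {m : ℕ} {s t : K} (hst : (s, t) ≠ (0, 0))
    {x : Fin (m + 1) → K} (hx : ∀ j : Fin m, t * x j.castSucc = s * x j.succ) :
    ∃ c : K, ∀ j : Fin (m + 1), x j = c * (s ^ (m - j) * t ^ (j : ℕ)) := by
  rcases eq_or_ne s 0 with rfl | hs
  · have ht : t ≠ 0 := fun h => hst (by rw [h])
    refine ⟨x (Fin.last m) / t ^ m, Fin.lastCases ?_ fun j => ?_⟩
    · simp [ht]
    · have hxj : x j.castSucc = 0 := by simpa [ht] using hx j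
      simp [hxj, zero_pow (Nat.sub_ne_zero_of_lt j.isLt)]
  · have hpow : ∀ j : Fin (m + 1), s ^ (j : ℕ) * x j = t ^ (j : ℕ) * x 0 := by
      intro j
      induction j using Fin.induction with
      | zero => simp
      | succ j ih =>
        simp only [Fin.val_succ, Fin.val_castSucc, pow_succ] at ih ⊢
        linear_combination t * ih - s ^ (j : ℕ) * hx j
    refine ⟨x 0 / s ^ m, fun j => ?_⟩
    have hsplit : s ^ m = s ^ (j : ℕ) * s ^ (m - j) := by
      rw [← pow_add, Nat.add_sub_cancel' (Nat.lt_succ_iff.mp j.isLt)]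
    rw [hsplit]
    field_simp
    linear_combination hpow j

abbrev BasisIdx (a : Fin n → ℕ) := (i : Fin n) × Fin (a i + 1)

abbrev PairIdx (a : Fin n → ℕ) := (i : Fin n) × Fin (a i)

def PairIdx.lo (c : PairIdx a) : BasisIdx a := ⟨c.1, c.2.castSucc⟩

def PairIdx.hi (c : PairIdx a) : BasisIdx a := ⟨c.1, c.2.succ⟩

theorem BasisIdx.exists_eq_lo_or_eq_hi (ha : ∀ i, 1 ≤ a i) (q : BasisIdx a) :
    (∃ c : PairIdx a, q = c.lo) ∨ ∃ c : PairIdx a, q = c.hi := by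
  obtain ⟨i, j⟩ := q
  rcases lt_or_ge (j : ℕ) (a i) with h | h
  · exact Or.inl ⟨⟨i, ⟨j, h⟩⟩, by simp [PairIdx.lo]⟩
  · refine Or.inr ⟨⟨i, ⟨a i - 1, by have := ha i; omega⟩⟩, ?_⟩
    simp only [PairIdx.hi, Sigma.mk.inj_iff, heq_eq_eq, true_and, Fin.ext_iff, Fin.val_succ]
    have := ha i
    omega

namespace ScrollData

variable (D : ScrollData K N n a) (htot : N + 1 = ∑ i, (a i + 1))

def basis : Module.Basis (BasisIdx a) K (Fin (N + 1) → K) :=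
  basisOfLinearIndependentOfCardEqFinrank' _ D.indep (by simp [← htot])

theorem basis_mk (i : Fin n) (j : Fin (a i + 1)) : D.basis htot ⟨i, j⟩ = D.v i j := by
  simp [basis]

def coord (q : BasisIdx a) : (Fin (N + 1) → K) →ₗ[K] K := (D.basis htot).coord q

theorem eq_zero_of_coord_lo_hi (ha : ∀ i, 1 ≤ a i) {u : Fin (N + 1) → K}
    (h : ∀ c : PairIdx a, D.coord htot c.lo u = 0 ∧ D.coord htot c.hi u = 0) : u = 0 := by
  refine (D.basis htot).forall_coord_eq_zero_iff.mp fun q => ?_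
  rcases BasisIdx.exists_eq_lo_or_eq_hi ha q with ⟨c, rfl⟩ | ⟨c, rfl⟩
  exacts [(h c).1, (h c).2]

def rulingMap (s t : K) : (Fin (N + 1) → K) →ₗ[K] (PairIdx a → K) :=
  LinearMap.pi fun c => t • D.coord htot c.lo - s • D.coord htot c.hi

def rulingSpace (s t : K) : Submodule K (Fin (N + 1) → K) :=
  LinearMap.ker (D.rulingMap htot s t)

def minor (c e : PairIdx a) : MvPolynomial (Fin (N + 1)) K :=
  linearPoly (D.coord htot c.lo) * linearPoly (D.coord htot e.hi) -
    linearPoly (D.coord htot c.hi) * linearPoly (D.coord htot e.lo)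

def polarForm (x : Fin (N + 1) → K) (c e : PairIdx a) : (Fin (N + 1) → K) →ₗ[K] K :=
  D.coord htot c.lo x • D.coord htot e.hi + D.coord htot e.hi x • D.coord htot c.lo -
    D.coord htot c.hi x • D.coord htot e.lo - D.coord htot e.lo x • D.coord htot c.hi

/-- `w ∈ D.polar htot x` iff `x` lies in the tangent hyperplane at `w` of every quadric
`D.minor htot c e`. -/
def polar (x : Fin (N + 1) → K) : Submodule K (Fin (N + 1) → K) :=
  ⨅ (c : PairIdx a) (e : PairIdx a), LinearMap.ker (D.polarForm htot x c e)

variable {D htot}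

theorem rulingMap_apply (s t : K) (u : Fin (N + 1) → K) (c : PairIdx a) :
    D.rulingMap htot s t u c = t * D.coord htot c.lo u - s * D.coord htot c.hi u := by
  simp [rulingMap]

theorem mem_rulingSpace_iff {s t : K} {u : Fin (N + 1) → K} :
    u ∈ D.rulingSpace htot s t ↔
      ∀ c : PairIdx a, t * D.coord htot c.lo u = s * D.coord htot c.hi u := by
  simp [rulingSpace, _root_.funext_iff, rulingMap_apply, sub_eq_zero]

theorem rulingMap_add (α β s₁ t₁ s₂ t₂ : K) :
    D.rulingMap htot (α * s₁ + β * s₂) (α * t₁ + β * t₂) =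
      α • D.rulingMap htot s₁ t₁ + β • D.rulingMap htot s₂ t₂ := by
  refine LinearMap.ext fun u => funext fun c => ?_
  simp only [rulingMap_apply, LinearMap.add_apply, LinearMap.smul_apply, Pi.add_apply,
    Pi.smul_apply, smul_eq_mul]
  ring

theorem rulingSpace_le {s t s' t' : K} (hst : (s, t) ≠ (0, 0)) (h : s * t' = t * s') :
    D.rulingSpace htot s t ≤ D.rulingSpace htot s' t' := by
  intro u hu
  rw [mem_rulingSpace_iff] at hu ⊢
  intro c
  refine sub_eq_zero.mp (eq_zero_of_mul_eq_zero_of_mul_eq_zero hst ?_ ?_)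
  · linear_combination D.coord htot c.lo u * h + s' * hu c
  · linear_combination t' * hu c + D.coord htot c.hi u * h

theorem disjoint_rulingSpace (ha : ∀ i, 1 ≤ a i) {s t s' t' : K} (h : s * t' ≠ t * s') :
    Disjoint (D.rulingSpace htot s t) (D.rulingSpace htot s' t') := by
  rw [Submodule.disjoint_def]
  intro u hu hu'
  rw [mem_rulingSpace_iff] at hu hu'
  have hdet : s * t' - t * s' ≠ 0 := sub_ne_zero.mpr h
  refine D.eq_zero_of_coord_lo_hi htot ha fun c => ⟨?_, ?_⟩
  · refine (mul_eq_zero.mp ?_).resolve_left hdet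
    linear_combination s * hu' c - s' * hu c
  · refine (mul_eq_zero.mp ?_).resolve_left hdet
    linear_combination t * hu' c - t' * hu c

theorem coord_w (q : BasisIdx a) (i : Fin n) (s t : K) :
    D.coord htot q (D.w i s t) = if q.1 = i then s ^ (a q.1 - q.2) * t ^ (q.2 : ℕ) else 0 := by
  obtain ⟨i', j'⟩ := q
  simp only [w, coord, ← D.basis_mk htot, map_sum, map_smul, Module.Basis.coord_apply,
    Module.Basis.repr_self, Finsupp.single_apply, smul_eq_mul, mul_ite, mul_one, mul_zero]
  by_cases h : i' = i
  · subst h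
    simp
  · rw [if_neg h]
    refine Finset.sum_eq_zero fun j _ => if_neg ?_
    rw [Sigma.mk.inj_iff]
    exact fun hq => h hq.1.symm

theorem w_mem_rulingSpace (s t : K) (i : Fin n) : D.w i s t ∈ D.rulingSpace htot s t := by
  rw [mem_rulingSpace_iff]
  intro c
  simp only [coord_w, PairIdx.lo, PairIdx.hi, Fin.val_castSucc, Fin.val_succ, mul_ite, mul_zero]
  split_ifs
  · have hexp : a c.1 - c.2 = a c.1 - (c.2 + 1) + 1 := by have := c.2.isLt; omega
    rw [hexp]
    ring
  · rfl

theorem rulingSpace_le_span_w {s t : K} (hst : (s, t) ≠ (0, 0)) :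
    D.rulingSpace htot s t ≤ Submodule.span K (Set.range fun i => D.w i s t) := by
  intro u hu
  rw [mem_rulingSpace_iff] at hu
  choose c hc using fun i => exists_eq_mul_pow_mul_pow_of_recurrence hst
    (x := fun j => D.coord htot ⟨i, j⟩ u) fun j => hu ⟨i, j⟩
  have hu_eq : u = ∑ i, c i • D.w i s t := by
    conv_lhs => rw [← (D.basis htot).sum_repr u]
    simp only [Fintype.sum_sigma, w, Finset.smul_sum, smul_smul, D.basis_mk htot]
    refine Finset.sum_congr rfl fun i _ => Finset.sum_congr rfl fun j _ => ?_
    rw [← Module.Basis.coord_apply, ← coord, hc i j]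
  rw [hu_eq]
  exact Submodule.sum_mem _ fun i _ => Submodule.smul_mem _ _ (Submodule.subset_span ⟨i, rfl⟩)

theorem ruling_eq_linSet {s t : K} (hst : (s, t) ≠ (0, 0)) :
    D.ruling s t = linSet (D.rulingSpace htot s t) := by
  rw [ruling, le_antisymm (Submodule.span_le.mpr ?_) (rulingSpace_le_span_w hst)]
  rintro _ ⟨i, rfl⟩
  exact w_mem_rulingSpace s t i

variable (htot) in
theorem mem_carrier_iff {x : PS K N} :
    x ∈ D.carrier ↔ ∃ s t : K, (s, t) ≠ (0, 0) ∧ x.rep ∈ D.rulingSpace htot s t := by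
  simp only [carrier, Set.mem_iUnion]
  refine exists₂_congr fun s t => ⟨fun ⟨hst, hx⟩ => ⟨hst, ?_⟩, fun ⟨hst, hx⟩ => ⟨hst, ?_⟩⟩
  · rwa [ruling_eq_linSet hst, mem_linSet_iff_rep] at hx
  · rwa [ruling_eq_linSet hst, mem_linSet_iff_rep]

theorem disjoint_ruling (htot : N + 1 = ∑ i, (a i + 1)) (ha : ∀ i, 1 ≤ a i) {s t s' t' : K}
    (hst : (s, t) ≠ (0, 0)) (hst' : (s', t') ≠ (0, 0)) (h : s * t' ≠ t * s') :
    Disjoint (D.ruling s t) (D.ruling s' t') := by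
  rw [ruling_eq_linSet (htot := htot) hst, ruling_eq_linSet (htot := htot) hst',
    Set.disjoint_left]
  intro x hx hx'
  exact x.rep_nonzero (Submodule.disjoint_def.mp (disjoint_rulingSpace ha h) _
    (mem_linSet_iff_rep.mp hx) (mem_linSet_iff_rep.mp hx'))

theorem finite_range_inf_rulingSpace {W : Submodule K (Fin (N + 1) → K)} {s₁ t₁ : K}
    (hst₁ : (s₁, t₁) ≠ (0, 0)) (hbot : W ⊓ D.rulingSpace htot s₁ t₁ = ⊥) :
    (Set.range fun st : K × K => W ⊓ D.rulingSpace htot st.1 st.2).Finite := by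
  obtain ⟨s₂, t₂, hdet⟩ := exists_mul_sub_mul_eq_one hst₁
  have hf : LinearMap.ker (D.rulingMap htot s₁ t₁ ∘ₗ W.subtype) = ⊥ := by
    rw [LinearMap.ker_comp, ← Submodule.disjoint_iff_comap_eq_bot, disjoint_iff]
    exact hbot
  refine ((LinearMap.finite_range_ker_pencil _ (D.rulingMap htot s₂ t₂ ∘ₗ W.subtype) hf).image
    (Submodule.map W.subtype)).subset ?_
  rintro _ ⟨⟨s, t⟩, rfl⟩
  refine ⟨_, ⟨(s * t₂ - t * s₂, s₁ * t - t₁ * s), rfl⟩, ?_⟩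
  have hs : s = (s * t₂ - t * s₂) * s₁ + (s₁ * t - t₁ * s) * s₂ := by
    linear_combination -s * hdet
  have ht : t = (s * t₂ - t * s₂) * t₁ + (s₁ * t - t₁ * s) * t₂ := by
    linear_combination -t * hdet
  dsimp only
  rw [← LinearMap.smul_comp, ← LinearMap.smul_comp, ← LinearMap.add_comp, ← rulingMap_add, ← hs,
    ← ht, LinearMap.ker_comp, Submodule.map_comap_subtype]
  rfl

theorem mem_polar_iff {x w : Fin (N + 1) → K} :
    w ∈ D.polar htot x ↔ ∀ c e : PairIdx a, D.polarForm htot x c e w = 0 := by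
  simp [polar]

theorem minor_mem_vanishing (c e : PairIdx a) : D.minor htot c e ∈ vanishing D.carrier := by
  intro v hv
  rcases eq_or_ne v 0 with rfl | hv0
  · simp only [minor, map_sub, map_mul, eval_linearPoly, map_zero, mul_zero, sub_zero]
  obtain ⟨s, t, hst, hvR⟩ := (mem_carrier_iff htot).mp (hv hv0)
  rw [← mem_linSet_iff_rep, mk_mem_linSet_iff, mem_rulingSpace_iff] at hvR
  simp only [minor, map_sub, map_mul, eval_linearPoly]
  refine eq_zero_of_mul_eq_zero_of_mul_eq_zero hst ?_ ?_
  · linear_combination D.coord htot e.lo v * hvR c - D.coord htot c.lo v * hvR e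
  · linear_combination D.coord htot e.hi v * hvR c - D.coord htot c.hi v * hvR e

theorem rep_mem_polar_of_mem_tangentSpace {p z : PS K N}
    (hp : p ∈ tangentSpace D.carrier z) : z.rep ∈ D.polar htot p.rep := by
  refine mem_polar_iff.mpr fun c e => ?_
  have h := hp _ (minor_mem_vanishing (htot := htot) c e)
  simp only [minor, map_sub, mul_sub, Finset.sum_sub_distrib,
    sum_mul_eval_pderiv_linearPoly_mul] at h
  rw [← h]
  simp only [polarForm, LinearMap.sub_apply, LinearMap.add_apply, LinearMap.smul_apply,
    smul_eq_mul]
  ring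

theorem finrank_polar_inf_rulingSpace_le_one (ha : ∀ i, 1 ≤ a i) {s t : K}
    (hst : (s, t) ≠ (0, 0)) {x : Fin (N + 1) → K} (hx : x ∉ D.rulingSpace htot s t) :
    Module.finrank K ↥(D.polar htot x ⊓ D.rulingSpace htot s t) ≤ 1 := by
  obtain ⟨s', t', hdet⟩ := exists_mul_sub_mul_eq_one hst
  -- on the ruling, `(w_{c.lo}, w_{c.hi}) = γ c w • (s, t)`
  set γ : PairIdx a → (Fin (N + 1) → K) →ₗ[K] K :=
    fun c => t' • D.coord htot c.lo - s' • D.coord htot c.hi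
  have hγ : ∀ w ∈ D.rulingSpace htot s t, ∀ c,
      D.coord htot c.lo w = γ c w * s ∧ D.coord htot c.hi w = γ c w * t := by
    intro w hw c
    have h := mem_rulingSpace_iff.mp hw c
    simp only [γ, LinearMap.sub_apply, LinearMap.smul_apply, smul_eq_mul]
    constructor
    · linear_combination -D.coord htot c.lo w * hdet - s' * h
    · linear_combination -D.coord htot c.hi w * hdet - t' * h
  obtain ⟨d, hd⟩ : ∃ d, D.rulingMap htot s t x d ≠ 0 := by
    by_contra! h
    exact hx (LinearMap.mem_ker.mpr (funext h))
  -- the polar conditions make `γ · w` proportional to `rulingMap s t x ≠ 0`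
  have hrel : ∀ w ∈ D.polar htot x ⊓ D.rulingSpace htot s t, ∀ c,
      γ c w * D.rulingMap htot s t x d = γ d w * D.rulingMap htot s t x c := by
    intro w hw c
    have hpol := mem_polar_iff.mp hw.1 c d
    simp only [polarForm, LinearMap.sub_apply, LinearMap.add_apply, LinearMap.smul_apply,
      smul_eq_mul, (hγ w hw.2 c).1, (hγ w hw.2 c).2, (hγ w hw.2 d).1, (hγ w hw.2 d).2] at hpol
    simp only [rulingMap_apply]
    linear_combination -hpol
  have hinj :
      Function.Injective ((γ d).comp (D.polar htot x ⊓ D.rulingSpace htot s t).subtype) := by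
    refine (injective_iff_map_eq_zero _).mpr fun ⟨w, hw⟩ h0 => Subtype.ext ?_
    refine D.eq_zero_of_coord_lo_hi htot ha fun c => ?_
    have hγc : γ c w = 0 := by
      have h := hrel w hw c
      rw [LinearMap.comp_apply, Submodule.subtype_apply] at h0
      rw [h0, zero_mul] at h
      exact (mul_eq_zero.mp h).resolve_right hd
    simp [(hγ w hw.2 c).1, (hγ w hw.2 c).2, hγc]
  exact (LinearMap.finrank_le_finrank_of_injective hinj).trans (Module.finrank_self K).le

theorem rep_notMem_span_rep {p z : PS K N} (hpX : p ∉ D.carrier) (hzX : z ∈ D.carrier) :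
    z.rep ∉ K ∙ p.rep := by
  intro h
  have hzp := eq_mk_of_rep_mem_span_singleton p.rep_nonzero h
  rw [p.mk_rep] at hzp
  exact hpX (hzp ▸ hzX)

theorem exists_mem_sup_inf_rulingSpace {p : PS K N} (hpX : p ∉ D.carrier)
    {W : Submodule K (Fin (N + 1) → K)} (hsec : secCone D.carrier p = linSet W)
    {v : Fin (N + 1) → K} (hv : v ∈ W) :
    ∃ s t : K, (s, t) ≠ (0, 0) ∧ v ∈ K ∙ p.rep ⊔ W ⊓ D.rulingSpace htot s t := by
  by_cases hvp : v ∈ K ∙ p.rep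
  · exact ⟨1, 0, by simp, Submodule.mem_sup_left hvp⟩
  have hv0 : v ≠ 0 := fun h => hvp (h ▸ zero_mem _)
  have hq : Projectivization.mk K v hv0 ∈ secCone D.carrier p := by
    rw [hsec, mk_mem_linSet_iff]
    exact hv
  have hqp : Projectivization.mk K v hv0 ≠ p := fun h => hvp <| by
    rw [← Projectivization.submodule_eq, ← h, Projectivization.submodule_mk]
    exact Submodule.mem_span_singleton_self v
  have hpW : p.rep ∈ W := mem_linSet_iff_rep.mp (hsec ▸ self_mem_secCone D.carrier p)
  obtain ⟨z, hzX, hzL⟩ := exists_mem_lineThrough_of_mem_secCone hq hqp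
  rw [lineThrough_mk, mem_linSet_iff_rep, Set.pair_comm] at hzL
  obtain ⟨s, t, hst, hzR⟩ := (mem_carrier_iff htot).mp hzX
  have hzW : z.rep ∈ W := Submodule.span_le.mpr (by simp [Set.insert_subset_iff, hv, hpW]) hzL
  refine ⟨s, t, hst, Submodule.span_le.mpr ?_
    (mem_span_insert_exchange hzL (rep_notMem_span_rep hpX hzX))⟩
  rintro _ (rfl | rfl)
  exacts [Submodule.mem_sup_right ⟨hzW, hzR⟩,
    Submodule.mem_sup_left (Submodule.mem_span_singleton_self _)]

theorem exists_le_sup_inf_rulingSpace [Infinite K] {p : PS K N} (hpX : p ∉ D.carrier)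
    {W : Submodule K (Fin (N + 1) → K)} (hsec : secCone D.carrier p = linSet W) {s₁ t₁ : K}
    (hst₁ : (s₁, t₁) ≠ (0, 0)) (hbot : W ⊓ D.rulingSpace htot s₁ t₁ = ⊥) :
    ∃ s t : K, (s, t) ≠ (0, 0) ∧ W ≤ K ∙ p.rep ⊔ W ⊓ D.rulingSpace htot s t := by
  by_contra! h
  have hS :
      {T | ∃ s t : K, (s, t) ≠ (0, 0) ∧ T = K ∙ p.rep ⊔ W ⊓ D.rulingSpace htot s t}.Finite :=
    ((finite_range_inf_rulingSpace hst₁ hbot).image (K ∙ p.rep ⊔ ·)).subset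
      fun _ ⟨s, t, _, hT⟩ => ⟨_, ⟨(s, t), rfl⟩, hT.symm⟩
  obtain ⟨v, hvW, hv⟩ := W.exists_mem_forall_notMem_of_finite hS
    fun _ ⟨s, t, hst, hT⟩ => hT ▸ h s t hst
  obtain ⟨s, t, hst, hvst⟩ := exists_mem_sup_inf_rulingSpace hpX hsec hvW
  exact hv _ ⟨s, t, hst, rfl⟩ hvst

theorem exists_mem_inf_rulingSpace_notMem_polar [Infinite K] (ha : ∀ i, 1 ≤ a i)
    {p : PS K N} {W : Submodule K (Fin (N + 1) → K)}
    (hfin : (Set.range fun st : K × K => W ⊓ D.rulingSpace htot st.1 st.2).Finite)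
    {s₀ t₀ : K} (hst₀ : (s₀, t₀) ≠ (0, 0)) (hpR₀ : p.rep ∉ D.rulingSpace htot s₀ t₀)
    (hP₀ : 2 ≤ Module.finrank K ↥(W ⊓ D.rulingSpace htot s₀ t₀)) :
    ∃ w ∈ W ⊓ D.rulingSpace htot s₀ t₀, w ∉ D.polar htot p.rep ∧
      ∀ s t : K, (s, t) ≠ (0, 0) → D.rulingSpace htot s t ≠ D.rulingSpace htot s₀ t₀ →
        w ∉ K ∙ p.rep ⊔ W ⊓ D.rulingSpace htot s t := by
  set S := insert (D.polar htot p.rep) {T | ∃ s t : K, (s, t) ≠ (0, 0) ∧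
    D.rulingSpace htot s t ≠ D.rulingSpace htot s₀ t₀ ∧
      T = K ∙ p.rep ⊔ W ⊓ D.rulingSpace htot s t}
  have hS : S.Finite := by
    refine ((hfin.image (K ∙ p.rep ⊔ ·)).subset ?_).insert _
    rintro _ ⟨s, t, -, -, rfl⟩
    exact ⟨_, ⟨(s, t), rfl⟩, rfl⟩
  have hSP₀ : ∀ T ∈ S, ¬ W ⊓ D.rulingSpace htot s₀ t₀ ≤ T := by
    rintro _ (rfl | ⟨s, t, hst, hR, rfl⟩) hle
    · have := (Submodule.finrank_mono (le_inf hle inf_le_right)).trans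
        (finrank_polar_inf_rulingSpace_le_one ha hst₀ hpR₀)
      omega
    · refine Submodule.not_le_sup_of_disjoint ?_
        (by rw [finrank_span_singleton p.rep_nonzero]; omega) hle
      refine Disjoint.mono inf_le_right inf_le_right ?_
      by_cases hcross : s₀ * t = t₀ * s
      · exact absurd (le_antisymm (rulingSpace_le hst (by linear_combination -hcross))
          (rulingSpace_le hst₀ hcross)) hR
      · exact disjoint_rulingSpace ha hcross
  obtain ⟨w, hwP₀, hwS⟩ := Submodule.exists_mem_forall_notMem_of_finite _ hS hSP₀
  exact ⟨w, hwP₀, hwS _ (Set.mem_insert _ _),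
    fun s t hst hR => hwS _ (Set.mem_insert_of_mem _ ⟨s, t, hst, hR, rfl⟩)⟩

theorem eq_mk_of_mem_lineThrough {p : PS K N} (hpX : p ∉ D.carrier)
    {W : Submodule K (Fin (N + 1) → K)} (hpW : p.rep ∈ W) {s₀ t₀ : K} {w : Fin (N + 1) → K}
    (hw0 : w ≠ 0) (hwW : w ∈ W) (hwR : w ∈ D.rulingSpace htot s₀ t₀)
    (hw : ∀ s t : K, (s, t) ≠ (0, 0) → D.rulingSpace htot s t ≠ D.rulingSpace htot s₀ t₀ →
      w ∉ K ∙ p.rep ⊔ W ⊓ D.rulingSpace htot s t)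
    {z : PS K N} (hzX : z ∈ D.carrier) (hzL : z ∈ lineThrough p (Projectivization.mk K w hw0)) :
    z = Projectivization.mk K w hw0 := by
  rw [lineThrough_mk, mem_linSet_iff_rep] at hzL
  obtain ⟨s, t, hst, hzR⟩ := (mem_carrier_iff htot).mp hzX
  by_cases hR : D.rulingSpace htot s t = D.rulingSpace htot s₀ t₀
  · refine eq_mk_of_rep_mem_span_singleton hw0 (by_contra fun hzw => hpX ?_)
    refine (mem_carrier_iff htot).mpr ⟨s, t, hst, Submodule.span_le.mpr ?_
      (mem_span_insert_exchange hzL hzw)⟩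
    rintro _ (rfl | rfl)
    exacts [hzR, hR ▸ hwR]
  · refine absurd (Submodule.span_le.mpr ?_ (mem_span_insert_exchange
      (Set.pair_comm p.rep w ▸ hzL) (rep_notMem_span_rep hpX hzX))) (hw s t hst hR)
    have hzW : z.rep ∈ W :=
      Submodule.span_le.mpr (by simp [Set.insert_subset_iff, hwW, hpW]) hzL
    rintro _ (rfl | rfl)
    exacts [Submodule.mem_sup_right ⟨hzW, hzR⟩,
      Submodule.mem_sup_left (Submodule.mem_span_singleton_self _)]

theorem inf_rulingSpace_ne_bot [Infinite K] (ha : ∀ i, 1 ≤ a i) {p : PS K N}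
    (hpX : p ∉ D.carrier) {W : Submodule K (Fin (N + 1) → K)} (hW : 3 ≤ Module.finrank K W)
    (hsec : secCone D.carrier p = linSet W) {s t : K} (hst : (s, t) ≠ (0, 0)) :
    W ⊓ D.rulingSpace htot s t ≠ ⊥ := by
  intro hbot
  have hpW : p.rep ∈ W := mem_linSet_iff_rep.mp (hsec ▸ self_mem_secCone D.carrier p)
  obtain ⟨s₀, t₀, hst₀, hWle⟩ := exists_le_sup_inf_rulingSpace hpX hsec hst hbot
  have hP₀ : 2 ≤ Module.finrank K ↥(W ⊓ D.rulingSpace htot s₀ t₀) := by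
    have :=
      (Submodule.finrank_mono hWle).trans (Submodule.finrank_add_le_finrank_add_finrank _ _)
    rw [finrank_span_singleton p.rep_nonzero] at this
    omega
  have hpR₀ : p.rep ∉ D.rulingSpace htot s₀ t₀ := fun h =>
    hpX ((mem_carrier_iff htot).mpr ⟨s₀, t₀, hst₀, h⟩)
  obtain ⟨w, hwP₀, hwpol, hw⟩ := exists_mem_inf_rulingSpace_notMem_polar ha
    (finite_range_inf_rulingSpace hst hbot) hst₀ hpR₀ hP₀
  have hw0 : w ≠ 0 := fun h => hwpol (h ▸ zero_mem _)
  have hq : Projectivization.mk K w hw0 ∈ secCone D.carrier p := by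
    rw [hsec, mk_mem_linSet_iff]
    exact hwP₀.1
  have hqp : Projectivization.mk K w hw0 ≠ p := fun h => hpR₀ <| by
    rw [← mem_linSet_iff_rep, ← h, mk_mem_linSet_iff]
    exact hwP₀.2
  have huniq {z : PS K N} (hzX : z ∈ D.carrier)
      (hzL : z ∈ lineThrough p (Projectivization.mk K w hw0)) :=
    eq_mk_of_mem_lineThrough hpX hpW hw0 hwP₀.1 hwP₀.2 hw hzX hzL
  -- the secant line through `p` and `[w]` meets the scroll only at `[w]`, so it is tangent there
  rcases exists_secant_of_mem_secCone hq hqp with ⟨x, hx, y, hy, hxy⟩ | ⟨z, hz, hT⟩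
  · exact hxy ((huniq hx.1 hx.2).trans (huniq hy.1 hy.2).symm)
  · have hwpol' := rep_mem_polar_of_mem_tangentSpace (htot := htot) hT
    rw [huniq hz.1 hz.2, ← mem_linSet_iff_rep, mk_mem_linSet_iff] at hwpol'
    exact hwpol hwpol'

theorem secLocus_inter_ruling_nonempty [Infinite K] (htot : N + 1 = ∑ i, (a i + 1))
    (ha : ∀ i, 1 ≤ a i) {p : PS K N} (hpX : p ∉ D.carrier)
    {W : Submodule K (Fin (N + 1) → K)} (hW : 3 ≤ Module.finrank K W)
    (hsec : secCone D.carrier p = linSet W) {s t : K} (hst : (s, t) ≠ (0, 0)) :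
    (secLocus D.carrier p ∩ D.ruling s t).Nonempty := by
  obtain ⟨w, hw, hw0⟩ := Submodule.exists_mem_ne_zero_of_ne_bot
    (inf_rulingSpace_ne_bot (htot := htot) ha hpX hW hsec hst)
  have hR : Projectivization.mk K w hw0 ∈ D.ruling s t := by
    rw [ruling_eq_linSet (htot := htot) hst, mk_mem_linSet_iff]
    exact hw.2
  refine ⟨_, ⟨Set.mem_iUnion₂.mpr ⟨s, t, Set.mem_iUnion.mpr ⟨hst, hR⟩⟩, ?_⟩, hR⟩
  rw [hsec, mk_mem_linSet_iff]
  exact hw.1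

end ScrollData

end Scrolls

theorem secant_locus_meets_every_ruling_general {K : Type*} [Field K] [IsAlgClosed K]
    {N n : ℕ} {a : Fin n → ℕ}
    (D : ScrollData K N n a) (ha : ∀ i, 1 ≤ a i)
    (htot : N + 1 = ∑ i, (a i + 1))
    (p : PS K N) (hp : p ∈ secVariety D.carrier \ D.carrier)
    (d : ℕ) (hd : 2 ≤ d) (hdim : IsLinearOfDim (secCone D.carrier p) d) :
    (∀ s t : K, (s, t) ≠ (0, 0) →
        (secLocus D.carrier p ∩ D.ruling s t).Nonempty) ∧
      ∀ s t : K, (s, t) ≠ (0, 0) → ¬ secLocus D.carrier p ⊆ D.ruling s t := by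
  obtain ⟨W, hW, hsec⟩ := hdim
  have hmeet : ∀ s t : K, (s, t) ≠ (0, 0) → (secLocus D.carrier p ∩ D.ruling s t).Nonempty :=
    fun s t hst => D.secLocus_inter_ruling_nonempty htot ha hp.2 (by omega) hsec hst
  refine ⟨hmeet, fun s t hst hsub => ?_⟩
  obtain ⟨s', t', hdet⟩ := exists_mul_sub_mul_eq_one hst
  have hst' : (s', t') ≠ (0, 0) := fun h => by simp_all
  obtain ⟨x, hxL, hx'⟩ := hmeet s' t' hst'
  have hcross : s * t' ≠ t * s' := sub_ne_zero.mp (by simp [hdet])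
  exact Set.disjoint_left.mp (D.disjoint_ruling htot ha hst hst' hcross) (hsub hxL) hx'

/-- If `X̃` is a smooth rational normal scroll of codimension at least 2 and
`p ∈ Sec(X̃) \ X̃` with `dim Sec_p(X̃) ≥ 2`, then `Σ_p(X̃)` meets every ruling
(i.e. `φ` restricted to `Σ_p(X̃)` is surjective); in particular `Σ_p(X̃)` is not
contained in any single ruling. -/
theorem secant_locus_meets_every_ruling {K : Type*} [Field K] [IsAlgClosed K]
    {N n : ℕ} {a : Fin n → ℕ}
    (D : ScrollData K N n a) (ha : ∀ i, 1 ≤ a i)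
    (htot : N + 1 = ∑ i, (a i + 1)) (hcodim : n + 2 ≤ N)
    (p : PS K N) (hp : p ∈ secVariety D.carrier \ D.carrier)
    (d : ℕ) (hd : 2 ≤ d) (hdim : IsLinearOfDim (secCone D.carrier p) d) :
    (∀ s t : K, (s, t) ≠ (0, 0) →
        (secLocus D.carrier p ∩ D.ruling s t).Nonempty) ∧
      ∀ s t : K, (s, t) ≠ (0, 0) → ¬ secLocus D.carrier p ⊆ D.ruling s t :=
  secant_locus_meets_every_ruling_general D ha htot p hp d hd hdim

end SecantLoci
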